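/- arXiv:0704.2119 — 3 statements merged into one kernel-verified Lean document; each statement's English description precedes it below -/
import Mathlib

section
/- Let (X, μ) be a finite measure space, let N ≥ 1, and let U : L²(μ, ℂᴺ) → L²(μ, ℂᴺ) be a continuous linear equivalence (a bounded bijective linear operator with bounded inverse) such that U(f·φ) = f·U(φ) for every bounded measurable function f : X → ℂ and every φ ∈ L²(μ, ℂᴺ). Suppose Ψ : X → Mat_N(ℂ) is an essentially bounded measurable function with (Uφ)(x) = Ψ(x)φ(x) for μ-almost all x, for every φ ∈ L²(μ, ℂᴺ). Then Ψ(x) is an invertible matrix for μ-almost all x ∈ X, the function x ↦ Ψ(x)⁻¹ (defined almost everywhere) is essentially bounded, and U⁻¹ is given by (U⁻¹φ)(x) = Ψ(x)⁻¹φ(x) for μ-almost all x, for every φ ∈ L²(μ, ℂᴺ). -/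
/-!
Applying `U⁻¹` to the constant functions `eᵢ` (a basis) produces `ψᵢ := U⁻¹ eᵢ` with
`Ψ(x) ψᵢ(x) = eᵢ` almost everywhere, so the matrix `Φ(x)` with columns `ψᵢ(x)` is a right, hence
two-sided, inverse of `Ψ(x)` for almost every `x`, and multiplication by `Φ` is `U⁻¹`. Essential
boundedness of `Φ` holds for every bounded multiplication operator: testing `U⁻¹` on `1_A v` for
all measurable `A` bounds `‖Φ(x) v‖` by `‖U⁻¹‖ ‖v‖` almost everywhere, and a countable dense set
of `v` then bounds `‖Φ(x)‖`.
-/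

open MeasureTheory
open scoped ENNReal

section Linear

variable {𝕜 E F ι : Type*} [NontriviallyNormedField 𝕜]
  [NormedAddCommGroup E] [NormedSpace 𝕜 E] [NormedAddCommGroup F] [NormedSpace 𝕜 F]

theorem Module.Basis.continuous_constrL [CompleteSpace 𝕜] [Fintype ι] [FiniteDimensional 𝕜 F]
    (b : Module.Basis ι 𝕜 E) : Continuous (b.constrL : (ι → F) → E →L[𝕜] F) := by
  have : FiniteDimensional 𝕜 E := b.finiteDimensional_of_finite
  let L : (ι → F) →ₗ[𝕜] E →L[𝕜] F :=
    { toFun := b.constrL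
      map_add' := fun f g => by ext; simp [smul_add, Finset.sum_add_distrib]
      map_smul' := fun c f => by ext; simp [smul_comm c, Finset.smul_sum] }
  exact L.continuous_of_finiteDimensional

theorem ContinuousLinearMap.comp_eq_id_comm [FiniteDimensional 𝕜 E] {f g : E →L[𝕜] E} :
    f.comp g = .id 𝕜 E ↔ g.comp f = .id 𝕜 E := by
  rw [← coe_inj, ← coe_inj]
  exact LinearMap.comp_eq_id_comm _ _

end Linear

section MultiplicationOperator

variable {X E F : Type*} [MeasurableSpace X] {μ : Measure X} {p : ℝ≥0∞}
  [NormedAddCommGroup E] [NormedAddCommGroup F]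

theorem ae_enorm_le_of_forall_eLpNorm_indicator_le [SigmaFinite μ] {f : X → E}
    (hf : AEStronglyMeasurable f μ) (hp : p ≠ 0) (hp_top : p ≠ ∞) {c : ℝ≥0∞}
    (h : ∀ s, MeasurableSet s → μ s < ∞ → eLpNorm (s.indicator f) p μ ≤ c * μ s ^ (1 / p.toReal)) :
    ∀ᵐ x ∂μ, ‖f x‖ₑ ≤ c := by
  have hq : 0 < p.toReal := ENNReal.toReal_pos hp hp_top
  have hpow : (fun x => ‖f x‖ₑ ^ p.toReal) ≤ᵐ[μ] fun _ => c ^ p.toReal := by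
    refine ae_le_of_forall_setLIntegral_le_of_sigmaFinite₀ (hf.enorm.pow_const _)
      fun s hs hμs => ?_
    have hs_bound := h s hs hμs
    rw [eLpNorm_indicator_eq_eLpNorm_restrict hs,
      eLpNorm_eq_lintegral_rpow_enorm_toReal hp hp_top] at hs_bound
    calc ∫⁻ x in s, ‖f x‖ₑ ^ p.toReal ∂μ
        = ((∫⁻ x in s, ‖f x‖ₑ ^ p.toReal ∂μ) ^ (1 / p.toReal)) ^ p.toReal := by
          rw [← ENNReal.rpow_mul, one_div_mul_cancel hq.ne', ENNReal.rpow_one]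
      _ ≤ (c * μ s ^ (1 / p.toReal)) ^ p.toReal := ENNReal.rpow_le_rpow hs_bound hq.le
      _ = ∫⁻ _ in s, c ^ p.toReal ∂μ := by
          rw [setLIntegral_const, ENNReal.mul_rpow_of_nonneg _ _ hq.le, ← ENNReal.rpow_mul,
            one_div_mul_cancel hq.ne', ENNReal.rpow_one]
  filter_upwards [hpow] with x hx
  exact (ENNReal.rpow_le_rpow_iff hq).mp hx

variable {𝕜 : Type*} [NontriviallyNormedField 𝕜] [NormedSpace 𝕜 E] [NormedSpace 𝕜 F]

def IsMultiplicationOperator (T : Lp E p μ → Lp F p μ) (Ψ : X → E →L[𝕜] F) : Prop :=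
  ∀ φ : Lp E p μ, ∀ᵐ x ∂μ, T φ x = Ψ x (φ x)

namespace IsMultiplicationOperator

variable [Fact (1 ≤ p)] {Ψ : X → E →L[𝕜] F}

theorem ae_norm_apply_le [IsFiniteMeasure μ] (hp : p ≠ 0) (hp_top : p ≠ ∞)
    {T : Lp E p μ →L[𝕜] Lp F p μ} (hT : IsMultiplicationOperator T Ψ) (v : E) :
    ∀ᵐ x ∂μ, ‖Ψ x v‖ ≤ ‖T‖ * ‖v‖ := by
  have hconst : (T (Lp.const p μ v) : X → F) =ᵐ[μ] fun x => Ψ x v := by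
    filter_upwards [hT (Lp.const p μ v), Lp.coeFn_const (p := p) (μ := μ) v] with x hTx hx
    rw [hTx, hx, Function.const_apply]
  have hbound : ∀ᵐ x ∂μ, ‖T (Lp.const p μ v) x‖ₑ ≤ ‖T‖ₑ * ‖v‖ₑ := by
    refine ae_enorm_le_of_forall_eLpNorm_indicator_le (Lp.aestronglyMeasurable _) hp hp_top
      fun s hs hμs => ?_
    have hφs : s.indicator (T (Lp.const p μ v)) =ᵐ[μ] T (indicatorConstLp p hs hμs.ne v) := by
      filter_upwards [hT (indicatorConstLp p hs hμs.ne v),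
        indicatorConstLp_coeFn (p := p) (hs := hs) (hμs := hμs.ne) (c := v), hconst]
        with x hTx hx hcx
      by_cases hxs : x ∈ s <;> simp [hTx, hx, hcx, hxs]
    rw [eLpNorm_congr_ae hφs, ← Lp.enorm_def, mul_assoc]
    exact (T.le_opENorm _).trans (mul_le_mul_right enorm_indicatorConstLp_le _)
  filter_upwards [hbound, hconst] with x hx hcx
  rw [← ofReal_norm, ← ofReal_norm, ← ofReal_norm, ← ENNReal.ofReal_mul (norm_nonneg _),
    ENNReal.ofReal_le_ofReal_iff (by positivity), hcx] at hx
  exact hx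

theorem ae_opNorm_le [IsFiniteMeasure μ] [TopologicalSpace.SeparableSpace E] (hp : p ≠ 0)
    (hp_top : p ≠ ∞) {T : Lp E p μ →L[𝕜] Lp F p μ} (hT : IsMultiplicationOperator T Ψ) :
    ∀ᵐ x ∂μ, ‖Ψ x‖ ≤ ‖T‖ := by
  obtain ⟨D, hD_countable, hD_dense⟩ := TopologicalSpace.exists_countable_dense E
  filter_upwards [(ae_ball_iff hD_countable).mpr fun v _ => hT.ae_norm_apply_le hp hp_top v]
    with x hx
  refine ContinuousLinearMap.opNorm_le_bound _ (norm_nonneg _) fun v => ?_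
  have hclosed : IsClosed {v | ‖Ψ x v‖ ≤ ‖T‖ * ‖v‖} := isClosed_le (by fun_prop) (by fun_prop)
  exact hclosed.closure_subset_iff.mpr hx (hD_dense v)

theorem symm {U : Lp E p μ ≃L[𝕜] Lp F p μ} (hU : IsMultiplicationOperator U Ψ)
    {Φ : X → F →L[𝕜] E} (hΦ : ∀ᵐ x ∂μ, (Φ x).comp (Ψ x) = .id 𝕜 E) :
    IsMultiplicationOperator U.symm Φ := by
  intro φ
  filter_upwards [hU (U.symm φ), hΦ] with x hUx hx
  rw [U.apply_symm_apply] at hUx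
  rw [hUx, ← ContinuousLinearMap.comp_apply, hx, ContinuousLinearMap.id_apply]

end IsMultiplicationOperator

end MultiplicationOperator

section FiniteDimensional

variable {X 𝕜 E : Type*} [MeasurableSpace X] {μ : Measure X} {p : ℝ≥0∞} [Fact (1 ≤ p)]
  [RCLike 𝕜] [NormedAddCommGroup E] [NormedSpace 𝕜 E] [FiniteDimensional 𝕜 E]

theorem IsMultiplicationOperator.exists_ae_inverse [IsFiniteMeasure μ] {Ψ : X → E →L[𝕜] E}
    {U : Lp E p μ ≃L[𝕜] Lp E p μ} (hU : IsMultiplicationOperator U Ψ) :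
    ∃ Φ : X → E →L[𝕜] E, AEStronglyMeasurable Φ μ ∧
      ∀ᵐ x ∂μ, (Φ x).comp (Ψ x) = .id 𝕜 E ∧ (Ψ x).comp (Φ x) = .id 𝕜 E := by
  let b := Module.finBasis 𝕜 E
  let ψ : Fin (Module.finrank 𝕜 E) → Lp E p μ := fun i => U.symm (Lp.const p μ (b i))
  have hψ : ∀ᵐ x ∂μ, ∀ i, Ψ x (ψ i x) = b i := ae_all_iff.mpr fun i => by
    filter_upwards [hU (ψ i), Lp.coeFn_const (p := p) (μ := μ) (b i)] with x hUx hx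
    rw [← hUx, U.apply_symm_apply, hx, Function.const_apply]
  refine ⟨fun x => b.constrL fun i => ψ i x, ?_, ?_⟩
  · have := FiniteDimensional.proper_rclike 𝕜 E
    borelize E
    exact b.continuous_constrL.comp_aestronglyMeasurable
      (aemeasurable_pi_lambda _ fun i =>
        (Lp.aestronglyMeasurable (ψ i)).aemeasurable).aestronglyMeasurable
  · filter_upwards [hψ] with x hx
    have hright : (Ψ x).comp (b.constrL fun i => ψ i x) = .id 𝕜 E :=
      ContinuousLinearMap.coe_injective (b.ext fun i => by simp [hx i])
    exact ⟨ContinuousLinearMap.comp_eq_id_comm.mp hright, hright⟩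

end FiniteDimensional

theorem stmt3_general {X : Type*} [MeasurableSpace X] (μ : Measure X) [IsFiniteMeasure μ]
    (N : ℕ)
    (U : Lp (EuclideanSpace ℂ (Fin N)) 2 μ ≃L[ℂ] Lp (EuclideanSpace ℂ (Fin N)) 2 μ)
    (Ψ : X → (EuclideanSpace ℂ (Fin N) →L[ℂ] EuclideanSpace ℂ (Fin N)))
    (hrep : ∀ φ : Lp (EuclideanSpace ℂ (Fin N)) 2 μ, ∀ᵐ x ∂μ, (U φ) x = Ψ x (φ x)) :
    (∀ᵐ x ∂μ, Function.Bijective (Ψ x)) ∧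
    ∃ Φ : X → (EuclideanSpace ℂ (Fin N) →L[ℂ] EuclideanSpace ℂ (Fin N)),
      MemLp Φ ⊤ μ ∧
      (∀ᵐ x ∂μ, (Φ x).comp (Ψ x) = ContinuousLinearMap.id ℂ (EuclideanSpace ℂ (Fin N)) ∧
        (Ψ x).comp (Φ x) = ContinuousLinearMap.id ℂ (EuclideanSpace ℂ (Fin N))) ∧
      ∀ φ : Lp (EuclideanSpace ℂ (Fin N)) 2 μ, ∀ᵐ x ∂μ, (U.symm φ) x = Φ x (φ x) := by
  have hU : IsMultiplicationOperator U Ψ := hrep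
  obtain ⟨Φ, hΦ_meas, hΦ_inv⟩ := hU.exists_ae_inverse
  have hU_symm : IsMultiplicationOperator U.symm Φ := hU.symm (hΦ_inv.mono fun _ hx => hx.1)
  have hΦ_bound := IsMultiplicationOperator.ae_opNorm_le two_ne_zero ENNReal.ofNat_ne_top
    (T := (U.symm : Lp (EuclideanSpace ℂ (Fin N)) 2 μ →L[ℂ] Lp (EuclideanSpace ℂ (Fin N)) 2 μ))
    hU_symm
  refine ⟨?_, Φ, memLp_top_of_bound hΦ_meas _ hΦ_bound, hΦ_inv, hU_symm⟩
  filter_upwards [hΦ_inv] with x hx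
  exact Function.bijective_iff_has_inverse.mpr
    ⟨Φ x, fun v => congr($(hx.1) v), fun v => congr($(hx.2) v)⟩

/-- Let `(X, μ)` be a finite measure space, `N ≥ 1`, and let `U` be a
continuous linear equivalence of `L²(μ, ℂᴺ)` commuting with pointwise multiplication by
every bounded measurable function `f : X → ℂ`. If `Ψ : X → Mat_N(ℂ)` is an essentially
bounded measurable function representing `U`, i.e. `(Uφ)(x) = Ψ(x) φ(x)` a.e. for every
`φ ∈ L²`, then `Ψ(x)` is invertible for a.e. `x`, the a.e.-defined inverse `x ↦ Ψ(x)⁻¹`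
is essentially bounded, and `U⁻¹` is given by multiplication by it. (Matrices acting on
`ℂᴺ` are encoded as continuous linear endomorphisms of `EuclideanSpace ℂ (Fin N)`.) -/
theorem stmt3 {X : Type*} [MeasurableSpace X] (μ : Measure X) [IsFiniteMeasure μ]
    (N : ℕ) (hN : 1 ≤ N)
    (U : Lp (EuclideanSpace ℂ (Fin N)) 2 μ ≃L[ℂ] Lp (EuclideanSpace ℂ (Fin N)) 2 μ)
    (hU : ∀ f : X → ℂ, Measurable f → (∃ C : ℝ, ∀ x, ‖f x‖ ≤ C) →
      ∀ φ ψ : Lp (EuclideanSpace ℂ (Fin N)) 2 μ,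
        (∀ᵐ x ∂μ, ψ x = f x • φ x) → ∀ᵐ x ∂μ, (U ψ) x = f x • (U φ) x)
    (Ψ : X → (EuclideanSpace ℂ (Fin N) →L[ℂ] EuclideanSpace ℂ (Fin N)))
    (hΨ : MemLp Ψ ⊤ μ)
    (hrep : ∀ φ : Lp (EuclideanSpace ℂ (Fin N)) 2 μ, ∀ᵐ x ∂μ, (U φ) x = Ψ x (φ x)) :
    (∀ᵐ x ∂μ, Function.Bijective (Ψ x)) ∧
    ∃ Φ : X → (EuclideanSpace ℂ (Fin N) →L[ℂ] EuclideanSpace ℂ (Fin N)),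
      MemLp Φ ⊤ μ ∧
      (∀ᵐ x ∂μ, (Φ x).comp (Ψ x) = ContinuousLinearMap.id ℂ (EuclideanSpace ℂ (Fin N)) ∧
        (Ψ x).comp (Φ x) = ContinuousLinearMap.id ℂ (EuclideanSpace ℂ (Fin N))) ∧
      ∀ φ : Lp (EuclideanSpace ℂ (Fin N)) 2 μ, ∀ᵐ x ∂μ, (U.symm φ) x = Φ x (φ x) :=
  stmt3_general μ N U Ψ hrep
end

section
/- Let V be a real vector space with two inner products g and g′, let W and W′ be nonzero complex vector spaces, and let c : V → End(W) and c′ : V → End(W′) be linear maps satisfying the Clifford relations c(ξ)∘c(η) + c(η)∘c(ξ) = −2 g(ξ,η)·id_W and c′(ξ)∘c′(η) + c′(η)∘c′(ξ) = −2 g′(ξ,η)·id_{W′} for all ξ, η ∈ V. Suppose there is a linear isomorphism Ψ : W → W′ such that √(g(ξ,ξ)) · c′(ξ) = √(g′(ξ,ξ)) · (Ψ ∘ c(ξ) ∘ Ψ⁻¹) for every nonzero ξ ∈ V (i.e. c′(ξ)/‖ξ‖_{g′} = Ψ ∘ (c(ξ)/‖ξ‖_g) ∘ Ψ⁻¹).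 Then for all nonzero ξ, η ∈ V one has g′(ξ, η) · √(g(ξ,ξ)) · √(g(η,η)) = g(ξ, η) · √(g′(ξ,ξ)) · √(g′(η,η)). -/
/-!
Conjugation by `Ψ` is an algebra isomorphism `End W ≃ End W'`, so multiplying the intertwining
relations for `ξ` and `η` and symmetrising compares the two anticommutators
`c' ξ c' η + c' η c' ξ` and `Ψ (c ξ c η + c η c ξ) Ψ⁻¹`. By the Clifford relations these
are the scalars `-2 g' ξ η` and `-2 g ξ η`, and scalars are faithful on the nonzero space `W'`.
-/

theorem smul_mul_smul_add_smul_mul_smul {R A : Type*} [CommSemiring R] [Semiring A]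
    [Algebra R A] (a b : R) (x y : A) :
    a • x * b • y + b • y * a • x = (a * b) • (x * y + y * x) := by
  rw [smul_mul_smul_comm, smul_mul_smul_comm, mul_comm b, smul_add]

theorem anticomm_scalar_eq_of_smul_eq_smul_map {K A B : Type*} [Field K] [Ring A] [Ring B]
    [Nontrivial B] [Algebra K A] [Algebra K B] (φ : A →ₐ[K] B) {a a' b b' s s' : K}
    {x y : A} {x' y' : B} (hx : a • x' = a' • φ x) (hy : b • y' = b' • φ y)
    (hxy : x * y + y * x = s • 1) (hxy' : x' * y' + y' * x' = s' • 1) :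
    a * b * s' = a' * b' * s := by
  have h : (a * b) • (x' * y' + y' * x') = (a' * b') • φ (x * y + y * x) := by
    rw [← smul_mul_smul_add_smul_mul_smul, hx, hy, smul_mul_smul_add_smul_mul_smul, map_add,
      map_mul, map_mul]
  rw [hxy, hxy', map_smul, map_one, smul_smul, smul_smul] at h
  exact (algebraMap K B).injective (by simpa only [Algebra.algebraMap_eq_smul_one] using h)

theorem anticomm_eq_of_clifford {R A : Type*} [Ring R] [Ring A] [Module R A] {x y : A} {s : R}
    (h : x * y + y * x + s • 1 = 0) : x * y + y * x = (-s) • 1 := by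
  rw [neg_smul]
  exact eq_neg_of_add_eq_zero_left h

theorem stmt5_general {V W W' : Type*} [AddCommGroup V] [Module ℝ V]
    [AddCommGroup W] [Module ℂ W]
    [AddCommGroup W'] [Module ℂ W'] [Nontrivial W']
    (g g' : V →ₗ[ℝ] V →ₗ[ℝ] ℝ)
    (c : V → Module.End ℂ W) (c' : V → Module.End ℂ W')
    (hcl : ∀ ξ η, c ξ * c η + c η * c ξ
      + ((2 * g ξ η : ℝ) : ℂ) • (1 : Module.End ℂ W) = 0)
    (hcl' : ∀ ξ η, c' ξ * c' η + c' η * c' ξ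
      + ((2 * g' ξ η : ℝ) : ℂ) • (1 : Module.End ℂ W') = 0)
    (Ψ : W ≃ₗ[ℂ] W')
    (hΨ : ∀ ξ, ξ ≠ 0 →
      (Real.sqrt (g ξ ξ) : ℂ) • c' ξ
        = (Real.sqrt (g' ξ ξ) : ℂ) •
            (Ψ.toLinearMap ∘ₗ c ξ ∘ₗ Ψ.symm.toLinearMap)) :
    ∀ ξ η, ξ ≠ 0 → η ≠ 0 →
      g' ξ η * Real.sqrt (g ξ ξ) * Real.sqrt (g η η)
        = g ξ η * Real.sqrt (g' ξ ξ) * Real.sqrt (g' η η) := by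
  intro ξ η hξ hη
  have h := anticomm_scalar_eq_of_smul_eq_smul_map (Ψ.conjAlgEquiv ℂ : _ →ₐ[ℂ] _)
    (hΨ ξ hξ) (hΨ η hη) (anticomm_eq_of_clifford (hcl ξ η))
    (anticomm_eq_of_clifford (hcl' ξ η))
  norm_cast at h
  linarith

/-- Let `g`, `g'` be inner products on a real vector space `V`, let `W`,
`W'` be nonzero complex vector spaces, and let `c : V → End(W)`, `c' : V → End(W')` be
(real-)linear maps satisfying the Clifford relations for `g` resp. `g'`. If a linear
isomorphism `Ψ : W ≃ W'` satisfies `‖ξ‖_g • c'(ξ) = ‖ξ‖_{g'} • (Ψ ∘ c(ξ) ∘ Ψ⁻¹)` for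
every nonzero `ξ`, then the normalized values of `g` and `g'` agree:
`g'(ξ,η) ‖ξ‖_g ‖η‖_g = g(ξ,η) ‖ξ‖_{g'} ‖η‖_{g'}` for all nonzero `ξ, η`. -/
theorem stmt5 {V W W' : Type*} [AddCommGroup V] [Module ℝ V]
    [AddCommGroup W] [Module ℂ W] [Nontrivial W]
    [AddCommGroup W'] [Module ℂ W'] [Nontrivial W']
    (g g' : V →ₗ[ℝ] V →ₗ[ℝ] ℝ)
    (hg_symm : ∀ ξ η, g ξ η = g η ξ) (hg_pos : ∀ ξ, ξ ≠ 0 → 0 < g ξ ξ)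
    (hg'_symm : ∀ ξ η, g' ξ η = g' η ξ) (hg'_pos : ∀ ξ, ξ ≠ 0 → 0 < g' ξ ξ)
    (c : V → Module.End ℂ W) (c' : V → Module.End ℂ W')
    (hc_add : ∀ ξ η, c (ξ + η) = c ξ + c η)
    (hc_smul : ∀ (r : ℝ) (ξ : V), c (r • ξ) = (r : ℂ) • c ξ)
    (hc'_add : ∀ ξ η, c' (ξ + η) = c' ξ + c' η)
    (hc'_smul : ∀ (r : ℝ) (ξ : V), c' (r • ξ) = (r : ℂ) • c' ξ)
    (hcl : ∀ ξ η, c ξ * c η + c η * c ξ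
      + ((2 * g ξ η : ℝ) : ℂ) • (1 : Module.End ℂ W) = 0)
    (hcl' : ∀ ξ η, c' ξ * c' η + c' η * c' ξ
      + ((2 * g' ξ η : ℝ) : ℂ) • (1 : Module.End ℂ W') = 0)
    (Ψ : W ≃ₗ[ℂ] W')
    (hΨ : ∀ ξ, ξ ≠ 0 →
      (Real.sqrt (g ξ ξ) : ℂ) • c' ξ
        = (Real.sqrt (g' ξ ξ) : ℂ) •
            (Ψ.toLinearMap ∘ₗ c ξ ∘ₗ Ψ.symm.toLinearMap)) :
    ∀ ξ η, ξ ≠ 0 → η ≠ 0 →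
      g' ξ η * Real.sqrt (g ξ ξ) * Real.sqrt (g η η)
        = g ξ η * Real.sqrt (g' ξ ξ) * Real.sqrt (g' η η) :=
  stmt5_general g g' c c' hcl hcl' Ψ hΨ
end

section
/- Let V be a real vector space with two inner products g and g′, let W and W′ be nonzero complex vector spaces, and let c : V → End(W) and c′ : V → End(W′) be linear maps satisfying the Clifford relations c(ξ)∘c(η) + c(η)∘c(ξ) = −2 g(ξ,η)·id_W and c′(ξ)∘c′(η) + c′(η)∘c′(ξ) = −2 g′(ξ,η)·id_{W′} for all ξ, η ∈ V. Suppose there is a linear isomorphism Ψ : W → W′ such that √(g(ξ,ξ)) · c′(ξ) = √(g′(ξ,ξ)) · (Ψ ∘ c(ξ) ∘ Ψ⁻¹) for every nonzero ξ ∈ V. Then there exists a real number λ > 0 such that g′(ξ, η) = λ · g(ξ, η) for all ξ, η ∈ V. -/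
/-!
The hypothesis says that `c ξ / ‖ξ‖_g` and `c' ξ / ‖ξ‖_{g'}` are conjugate under `Ψ`.
Conjugation is an algebra isomorphism, so it carries the anticommutator of `c ξ / ‖ξ‖_g` and
`c η / ‖η‖_g`, which is `-2 g(ξ,η) / (‖ξ‖_g ‖η‖_g)`, to the corresponding one for `c'`: the
"cosines" of `g` and `g'` agree. In particular `g` and `g'` have the same orthogonality
relation, and a positive definite form is determined up to a positive factor by its
orthogonality relation: projecting `ξ` orthogonally onto `η` shows
`g'(·, η) = μ(η) g(·, η)` with `μ(η) = g'(η,η) / g(η,η)`, and symmetry forces `μ(ξ) = μ(η)`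
whenever `g(ξ,η) ≠ 0`, which links any two nonzero vectors through `ξ + η`.
-/

open Real

theorem mul_mul_eq_of_smul_eq_smul_of_anticomm {𝕜 A : Type*} [Field 𝕜] [Ring A] [Algebra 𝕜 A]
    [Nontrivial A] {x y x₀ y₀ : A} {a a' b b' t t₀ : 𝕜}
    (hx : a • x = b • x₀) (hy : a' • y = b' • y₀)
    (h : x * y + y * x + t • 1 = 0) (h₀ : x₀ * y₀ + y₀ * x₀ + t₀ • 1 = 0) :
    a * a' * t = b * b' * t₀ := by
  have hanti : (a * a') • (x * y + y * x) = (b * b') • (x₀ * y₀ + y₀ * x₀) :=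
    calc (a * a') • (x * y + y * x) = (a • x) * (a' • y) + (a' • y) * (a • x) := by
          rw [smul_mul_smul_comm, smul_mul_smul_comm, mul_comm a' a, smul_add]
      _ = (b • x₀) * (b' • y₀) + (b' • y₀) * (b • x₀) := by rw [hx, hy]
      _ = (b * b') • (x₀ * y₀ + y₀ * x₀) := by
          rw [smul_mul_smul_comm, smul_mul_smul_comm, mul_comm b' b, smul_add]
  rw [eq_neg_of_add_eq_zero_left h, eq_neg_of_add_eq_zero_left h₀, smul_neg, smul_neg,
    neg_inj, smul_smul, smul_smul, ← Algebra.algebraMap_eq_smul_one,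
    ← Algebra.algebraMap_eq_smul_one] at hanti
  exact (algebraMap 𝕜 A).injective hanti

section Clifford

variable {V W : Type*} [AddCommGroup V] [Module ℝ V] [AddCommGroup W] [Module ℂ W]

def IsCliffordMultiplication (g : V →ₗ[ℝ] V →ₗ[ℝ] ℝ) (c : V → Module.End ℂ W) : Prop :=
  ∀ ξ η, c ξ * c η + c η * c ξ + ((2 * g ξ η : ℝ) : ℂ) • (1 : Module.End ℂ W) = 0

theorem IsCliffordMultiplication.sqrt_mul_sqrt_mul_eq_of_smul_eq_conj
    {W' : Type*} [AddCommGroup W'] [Module ℂ W'] [Nontrivial W']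
    {g g' : V →ₗ[ℝ] V →ₗ[ℝ] ℝ} {c : V → Module.End ℂ W} {c' : V → Module.End ℂ W'}
    (hc : IsCliffordMultiplication g c) (hc' : IsCliffordMultiplication g' c')
    (Ψ : W ≃ₗ[ℂ] W') {ξ η : V}
    (hξ : (√(g ξ ξ) : ℂ) • c' ξ = (√(g' ξ ξ) : ℂ) • Ψ.conjAlgEquiv ℂ (c ξ))
    (hη : (√(g η η) : ℂ) • c' η = (√(g' η η) : ℂ) • Ψ.conjAlgEquiv ℂ (c η)) :
    √(g ξ ξ) * √(g η η) * g' ξ η = √(g' ξ ξ) * √(g' η η) * g ξ η := by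
  have hconj := congrArg (Ψ.conjAlgEquiv ℂ) (hc ξ η)
  simp only [map_add, map_mul, map_smul, map_one, map_zero] at hconj
  have hscalar := mul_mul_eq_of_smul_eq_smul_of_anticomm hξ hη (hc' ξ η) hconj
  have hcast : ((√(g ξ ξ) * √(g η η) * g' ξ η : ℝ) : ℂ)
      = ((√(g' ξ ξ) * √(g' η η) * g ξ η : ℝ) : ℂ) := by
    push_cast at hscalar ⊢
    linear_combination hscalar / 2
  exact_mod_cast hcast

end Clifford

section Conformal

variable {V : Type*} [AddCommGroup V] [Module ℝ V] {g g' : V →ₗ[ℝ] V →ₗ[ℝ] ℝ}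

theorem apply_eq_div_mul_of_forall_apply_eq_zero {η : V} (hη : g η η ≠ 0)
    (hortho : ∀ ξ, g ξ η = 0 → g' ξ η = 0) (ξ : V) :
    g' ξ η = g' η η / g η η * g ξ η := by
  have hproj : g (ξ - (g ξ η / g η η) • η) η = 0 := by
    simp only [map_sub, map_smul, LinearMap.sub_apply, LinearMap.smul_apply, smul_eq_mul]
    field_simp
    ring
  have hproj' := hortho _ hproj
  simp only [map_sub, map_smul, LinearMap.sub_apply, LinearMap.smul_apply, smul_eq_mul] at hproj'
  rw [sub_eq_zero.mp hproj']
  ring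

section Anisotropic

variable (hg_symm : ∀ ξ η, g ξ η = g η ξ) (hg'_symm : ∀ ξ η, g' ξ η = g' η ξ)
  (hg : ∀ ξ, ξ ≠ 0 → g ξ ξ ≠ 0) (hortho : ∀ ξ η, g ξ η = 0 → g' ξ η = 0)
include hg_symm hg'_symm hg hortho

theorem div_eq_div_of_apply_ne_zero {ξ η : V} (h : g ξ η ≠ 0) :
    g' ξ ξ / g ξ ξ = g' η η / g η η := by
  have hξ : g ξ ξ ≠ 0 := hg ξ (by rintro rfl; simp at h)
  have hη : g η η ≠ 0 := hg η (by rintro rfl; simp at h)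
  have hηξ := apply_eq_div_mul_of_forall_apply_eq_zero hη (hortho · η) ξ
  have hξη := apply_eq_div_mul_of_forall_apply_eq_zero hξ (hortho · ξ) η
  rw [hg'_symm, hξη, hg_symm η ξ] at hηξ
  exact mul_right_cancel₀ h hηξ

theorem div_eq_div_of_ne_zero {ξ η : V} (hξ : ξ ≠ 0) (hη : η ≠ 0) :
    g' ξ ξ / g ξ ξ = g' η η / g η η := by
  by_cases h : g ξ η = 0
  · have hξξη : g ξ (ξ + η) = g ξ ξ := by simp [h]
    have hξηη : g (ξ + η) η = g η η := by simp [h]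
    have hξη : ξ + η ≠ 0 := by
      rintro h0
      rw [h0, map_zero] at hξηη
      exact hg η hη hξηη.symm
    rw [div_eq_div_of_apply_ne_zero hg_symm hg'_symm hg hortho (hξξη ▸ hg ξ hξ),
      div_eq_div_of_apply_ne_zero hg_symm hg'_symm hg hortho (hξηη ▸ hg η hη)]
  · exact div_eq_div_of_apply_ne_zero hg_symm hg'_symm hg hortho h

end Anisotropic

theorem exists_pos_eq_mul_of_forall_apply_eq_zero
    (hg_symm : ∀ ξ η, g ξ η = g η ξ) (hg_pos : ∀ ξ, ξ ≠ 0 → 0 < g ξ ξ)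
    (hg'_symm : ∀ ξ η, g' ξ η = g' η ξ) (hg'_pos : ∀ ξ, ξ ≠ 0 → 0 < g' ξ ξ)
    (hortho : ∀ ξ η, g ξ η = 0 → g' ξ η = 0) :
    ∃ lam : ℝ, 0 < lam ∧ ∀ ξ η, g' ξ η = lam * g ξ η := by
  rcases subsingleton_or_nontrivial V with hV | hV
  · exact ⟨1, one_pos, fun ξ η => by simp [Subsingleton.elim ξ 0]⟩
  obtain ⟨ξ₀, hξ₀⟩ := exists_ne (0 : V)
  have hg : ∀ ξ, ξ ≠ 0 → g ξ ξ ≠ 0 := fun ξ hξ => (hg_pos ξ hξ).ne'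
  refine ⟨g' ξ₀ ξ₀ / g ξ₀ ξ₀, div_pos (hg'_pos ξ₀ hξ₀) (hg_pos ξ₀ hξ₀), fun ξ η => ?_⟩
  rcases eq_or_ne η 0 with rfl | hη
  · simp
  rw [apply_eq_div_mul_of_forall_apply_eq_zero (hg η hη) (hortho · η),
    div_eq_div_of_ne_zero hg_symm hg'_symm hg hortho hη hξ₀]

end Conformal

theorem stmt6_general {V W W' : Type*} [AddCommGroup V] [Module ℝ V]
    [AddCommGroup W] [Module ℂ W]
    [AddCommGroup W'] [Module ℂ W'] [Nontrivial W']
    (g g' : V →ₗ[ℝ] V →ₗ[ℝ] ℝ)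
    (hg_symm : ∀ ξ η, g ξ η = g η ξ) (hg_pos : ∀ ξ, ξ ≠ 0 → 0 < g ξ ξ)
    (hg'_symm : ∀ ξ η, g' ξ η = g' η ξ) (hg'_pos : ∀ ξ, ξ ≠ 0 → 0 < g' ξ ξ)
    (c : V → Module.End ℂ W) (c' : V → Module.End ℂ W')
    (hcl : ∀ ξ η, c ξ * c η + c η * c ξ
      + ((2 * g ξ η : ℝ) : ℂ) • (1 : Module.End ℂ W) = 0)
    (hcl' : ∀ ξ η, c' ξ * c' η + c' η * c' ξ
      + ((2 * g' ξ η : ℝ) : ℂ) • (1 : Module.End ℂ W') = 0)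
    (Ψ : W ≃ₗ[ℂ] W')
    (hΨ : ∀ ξ, ξ ≠ 0 →
      (Real.sqrt (g ξ ξ) : ℂ) • c' ξ
        = (Real.sqrt (g' ξ ξ) : ℂ) •
            (Ψ.toLinearMap ∘ₗ c ξ ∘ₗ Ψ.symm.toLinearMap)) :
    ∃ lam : ℝ, 0 < lam ∧ ∀ ξ η, g' ξ η = lam * g ξ η := by
  refine exists_pos_eq_mul_of_forall_apply_eq_zero hg_symm hg_pos hg'_symm hg'_pos ?_
  intro ξ η h
  rcases eq_or_ne ξ 0 with rfl | hξ
  · simp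
  rcases eq_or_ne η 0 with rfl | hη
  · simp
  have hcos := IsCliffordMultiplication.sqrt_mul_sqrt_mul_eq_of_smul_eq_conj
    hcl hcl' Ψ (hΨ ξ hξ) (hΨ η hη)
  rw [h, mul_zero] at hcos
  have hnorm : 0 < √(g ξ ξ) * √(g η η) :=
    mul_pos (sqrt_pos.mpr (hg_pos ξ hξ)) (sqrt_pos.mpr (hg_pos η hη))
  exact (mul_eq_zero.mp hcos).resolve_left hnorm.ne'

/-- Let `g`, `g'` be inner products on a real vector space `V`, let `W`,
`W'` be nonzero complex vector spaces, and let `c : V → End(W)`, `c' : V → End(W')` be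
(real-)linear maps satisfying the Clifford relations for `g` resp. `g'`. If a linear
isomorphism `Ψ : W ≃ W'` satisfies `‖ξ‖_g • c'(ξ) = ‖ξ‖_{g'} • (Ψ ∘ c(ξ) ∘ Ψ⁻¹)` for
every nonzero `ξ`, then `g' = λ • g` for some real `λ > 0`. -/
theorem stmt6 {V W W' : Type*} [AddCommGroup V] [Module ℝ V]
    [AddCommGroup W] [Module ℂ W] [Nontrivial W]
    [AddCommGroup W'] [Module ℂ W'] [Nontrivial W']
    (g g' : V →ₗ[ℝ] V →ₗ[ℝ] ℝ)
    (hg_symm : ∀ ξ η, g ξ η = g η ξ) (hg_pos : ∀ ξ, ξ ≠ 0 → 0 < g ξ ξ)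
    (hg'_symm : ∀ ξ η, g' ξ η = g' η ξ) (hg'_pos : ∀ ξ, ξ ≠ 0 → 0 < g' ξ ξ)
    (c : V → Module.End ℂ W) (c' : V → Module.End ℂ W')
    (hc_add : ∀ ξ η, c (ξ + η) = c ξ + c η)
    (hc_smul : ∀ (r : ℝ) (ξ : V), c (r • ξ) = (r : ℂ) • c ξ)
    (hc'_add : ∀ ξ η, c' (ξ + η) = c' ξ + c' η)
    (hc'_smul : ∀ (r : ℝ) (ξ : V), c' (r • ξ) = (r : ℂ) • c' ξ)
    (hcl : ∀ ξ η, c ξ * c η + c η * c ξ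
      + ((2 * g ξ η : ℝ) : ℂ) • (1 : Module.End ℂ W) = 0)
    (hcl' : ∀ ξ η, c' ξ * c' η + c' η * c' ξ
      + ((2 * g' ξ η : ℝ) : ℂ) • (1 : Module.End ℂ W') = 0)
    (Ψ : W ≃ₗ[ℂ] W')
    (hΨ : ∀ ξ, ξ ≠ 0 →
      (Real.sqrt (g ξ ξ) : ℂ) • c' ξ
        = (Real.sqrt (g' ξ ξ) : ℂ) •
            (Ψ.toLinearMap ∘ₗ c ξ ∘ₗ Ψ.symm.toLinearMap)) :
    ∃ lam : ℝ, 0 < lam ∧ ∀ ξ η, g' ξ η = lam * g ξ η :=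
  stmt6_general g g' hg_symm hg_pos hg'_symm hg'_pos c c' hcl hcl' Ψ hΨ
end
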